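/- arXiv:2508.19913 — 6 statements merged into one kernel-verified Lean document; each statement's English description precedes it below -/
import Mathlib

section
/- Let 0 < δ < 1, p < 1/2, and let d, d_a, d_b be natural numbers with d ≥ 2, d_a < d, d_b < d. If d_a^p + d_b^p ≤ (1-δ) d^p, then √d_a + √d_b < (1-δ) √d. -/
lemma aux_sqrt_le (p : ℝ) (hp0 : 0 < p) (hp : p < 1 / 2) (d n : ℕ) (hn : n < d) :
    Real.sqrt n ≤ (n : ℝ) ^ p * (d : ℝ) ^ (1 / 2 - p) := by
  rcases Nat.eq_zero_or_pos n with h0 | h0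
  · simp [h0, Real.zero_rpow (ne_of_gt hp0)]
  · have hn0 : (0 : ℝ) < n := by exact_mod_cast h0
    have : Real.sqrt n = (n : ℝ) ^ p * (n : ℝ) ^ (1 / 2 - p) := by
      rw [← Real.rpow_add hn0, Real.sqrt_eq_rpow]; norm_num
    rw [this]
    apply mul_le_mul_of_nonneg_left _ (Real.rpow_nonneg hn0.le p)
    exact Real.rpow_le_rpow hn0.le (by exact_mod_cast hn.le) (by linarith)

lemma aux_sqrt_lt (p : ℝ) (hp0 : 0 < p) (hp : p < 1 / 2) (d n : ℕ) (hn : n < d)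
    (h0 : 0 < n) : Real.sqrt n < (n : ℝ) ^ p * (d : ℝ) ^ (1 / 2 - p) := by
  have hn0 : (0 : ℝ) < n := by exact_mod_cast h0
  have : Real.sqrt n = (n : ℝ) ^ p * (n : ℝ) ^ (1 / 2 - p) := by
    rw [← Real.rpow_add hn0, Real.sqrt_eq_rpow]; norm_num
  rw [this]
  apply mul_lt_mul_of_pos_left _ (Real.rpow_pos_of_pos hn0 p)
  exact Real.rpow_lt_rpow hn0.le (by exact_mod_cast hn) (by linarith)

/-- Key inequality in Lemma 4: if `dₐ^p + d_b^p ≤ (1-δ) d^p` with `0 < δ < 1`,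
`0 < p < 1/2`, `d ≥ 2`, `dₐ, d_b < d`, then `√dₐ + √d_b < (1-δ) √d`. -/
theorem stmt_0 (δ p : ℝ) (hδ0 : 0 < δ) (hδ1 : δ < 1) (hp0 : 0 < p) (hp : p < 1 / 2)
    (d da db : ℕ) (hd : 2 ≤ d) (hda : da < d) (hdb : db < d)
    (h : (da : ℝ) ^ p + (db : ℝ) ^ p ≤ (1 - δ) * (d : ℝ) ^ p) :
    Real.sqrt da + Real.sqrt db < (1 - δ) * Real.sqrt d := by
  have hd0 : (0 : ℝ) < d := by exact_mod_cast Nat.lt_of_lt_of_le (by norm_num) hd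
  have hsqrt : (1 - δ) * (d : ℝ) ^ p * (d : ℝ) ^ (1 / 2 - p) = (1 - δ) * Real.sqrt d := by
    rw [mul_assoc, ← Real.rpow_add hd0, Real.sqrt_eq_rpow]; norm_num
  rcases Nat.eq_zero_or_pos (da + db) with h0 | h0
  · have hda0 : da = 0 := by omega
    have hdb0 : db = 0 := by omega
    simp only [hda0, hdb0, Nat.cast_zero, Real.sqrt_zero, add_zero]
    have : 0 < Real.sqrt d := Real.sqrt_pos.mpr hd0
    nlinarith
  · have hstep : Real.sqrt da + Real.sqrt db
        < ((da : ℝ) ^ p + (db : ℝ) ^ p) * (d : ℝ) ^ (1 / 2 - p) := by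
      rw [add_mul]
      rcases Nat.eq_zero_or_pos da with hda0 | hda0
      · have hdbpos : 0 < db := by omega
        exact add_lt_add_of_le_of_lt (aux_sqrt_le p hp0 hp d da hda)
          (aux_sqrt_lt p hp0 hp d db hdb hdbpos)
      · exact add_lt_add_of_lt_of_le (aux_sqrt_lt p hp0 hp d da hda hda0)
          (aux_sqrt_le p hp0 hp d db hdb)
    calc Real.sqrt da + Real.sqrt db
        < ((da : ℝ) ^ p + (db : ℝ) ^ p) * (d : ℝ) ^ (1 / 2 - p) := hstep
      _ ≤ (1 - δ) * (d : ℝ) ^ p * (d : ℝ) ^ (1 / 2 - p) :=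
          mul_le_mul_of_nonneg_right h (Real.rpow_nonneg hd0.le _)
      _ = (1 - δ) * Real.sqrt d := hsqrt
end

section
/- Let p = 0.48 and 0 < δ < 1, and let f : ℕ → ℝ satisfy f(0) = 0, f(1) = 1, and for all d ≥ 2, f(d) = max { f(d_a) + f(d_b) : d_a, d_b ∈ ℕ, d_a^p + d_b^p ≤ (1-δ) d^p } + 2√d. Then for all d, f(d) ≤ (2/δ)√d. -/
/-- Lemma 4: with `p = 0.48`, if `f 0 = 0`, `f 1 = 1` and, for `d ≥ 2`,
`f d = max { f dₐ + f d_b : dₐ^p + d_b^p ≤ (1-δ) d^p } + 2 √d`, then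
`f d ≤ (2/δ) √d` for all `d`. -/
theorem stmt_1 (δ : ℝ) (hδ0 : 0 < δ) (hδ1 : δ < 1) (f : ℕ → ℝ)
    (h0 : f 0 = 0) (h1 : f 1 = 1)
    (hrec : ∀ d : ℕ, 2 ≤ d →
      IsGreatest
        {x : ℝ | ∃ da db : ℕ,
          (da : ℝ) ^ (0.48 : ℝ) + (db : ℝ) ^ (0.48 : ℝ) ≤ (1 - δ) * (d : ℝ) ^ (0.48 : ℝ) ∧
          x = f da + f db}
        (f d - 2 * Real.sqrt d)) :
    ∀ d : ℕ, f d ≤ (2 / δ) * Real.sqrt d := by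
  have key : ∀ a d : ℕ, a ≤ d →
      Real.sqrt a ≤ (a : ℝ) ^ (0.48 : ℝ) * (d : ℝ) ^ (0.02 : ℝ) := by
    intro a d had
    rcases Nat.eq_zero_or_pos a with rfl | ha
    · rw [Nat.cast_zero, Real.sqrt_zero, Real.zero_rpow (by norm_num), zero_mul]
    · have ha' : (0:ℝ) < a := by exact_mod_cast ha
      rw [Real.sqrt_eq_rpow]
      rw [show (1/2 : ℝ) = 0.48 + 0.02 by norm_num, Real.rpow_add ha']
      gcongr
  intro d
  induction d using Nat.strong_induction_on with
  | _ d ih =>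
    rcases lt_or_ge d 2 with hd | hd
    · interval_cases d
      · simp [h0]
      · rw [h1, Nat.cast_one, Real.sqrt_one, mul_one, le_div_iff₀ hδ0]
        linarith
    · obtain ⟨hmem, _⟩ := hrec d hd
      obtain ⟨da, db, hle, heq⟩ := hmem
      have hd0 : (0:ℝ) < (d:ℝ) := by
        have : (2:ℝ) ≤ (d:ℝ) := by exact_mod_cast hd
        linarith
      have hdp : (0:ℝ) < (d:ℝ)^(0.48:ℝ) := Real.rpow_pos_of_pos hd0 _
      have hnn : ∀ n : ℕ, (0:ℝ) ≤ (n:ℝ)^(0.48:ℝ) :=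
        fun n => Real.rpow_nonneg (Nat.cast_nonneg n) _
      have hlt : ∀ a : ℕ, (a:ℝ)^(0.48:ℝ) ≤ (1-δ)*(d:ℝ)^(0.48:ℝ) → a < d := by
        intro a h
        by_contra hcon
        push_neg at hcon
        have : (d:ℝ)^(0.48:ℝ) ≤ (a:ℝ)^(0.48:ℝ) :=
          Real.rpow_le_rpow hd0.le (by exact_mod_cast hcon) (by norm_num)
        nlinarith
      have hda : da < d := hlt da (by nlinarith [hnn db])
      have hdb : db < d := hlt db (by nlinarith [hnn da])
      have h1a := ih da hda
      have h1b := ih db hdb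
      have hq : (0:ℝ) ≤ (d:ℝ)^(0.02:ℝ) := Real.rpow_nonneg hd0.le _
      have hsum : Real.sqrt da + Real.sqrt db ≤ (1-δ) * Real.sqrt d := by
        have ka := key da d hda.le
        have kb := key db d hdb.le
        have hsd : Real.sqrt d = (d:ℝ)^(0.48:ℝ) * (d:ℝ)^(0.02:ℝ) := by
          rw [Real.sqrt_eq_rpow, show (1/2 : ℝ) = 0.48 + 0.02 by norm_num,
            Real.rpow_add hd0]
        rw [hsd]
        calc Real.sqrt da + Real.sqrt db
            ≤ ((da:ℝ)^(0.48:ℝ) + (db:ℝ)^(0.48:ℝ)) * (d:ℝ)^(0.02:ℝ) := by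
              nlinarith
          _ ≤ ((1-δ) * (d:ℝ)^(0.48:ℝ)) * (d:ℝ)^(0.02:ℝ) := by nlinarith
          _ = (1-δ) * ((d:ℝ)^(0.48:ℝ) * (d:ℝ)^(0.02:ℝ)) := by ring
      have hfd : f d = f da + f db + 2 * Real.sqrt d := by linarith [heq]
      have hs0 : (0:ℝ) ≤ Real.sqrt d := Real.sqrt_nonneg _
      have hc : (0:ℝ) < 2/δ := by positivity
      have : f d ≤ (2/δ) * (Real.sqrt da + Real.sqrt db) + 2 * Real.sqrt d := by
        rw [hfd]; nlinarith
      have h2 : (2/δ) * ((1-δ) * Real.sqrt d) + 2 * Real.sqrt d = (2/δ) * Real.sqrt d := by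
        field_simp
        ring
      nlinarith
end

section
/- For h ≥ 3 and a nonnegative integer a, the points p_1 = (0,0), p_j = (a(j-1) + (j-2)(j-1)/2, j-1) for j = 2,…,h-1, and p_h = (a + h - 2, 1) are the vertices, in order, of a strictly convex polygon in the plane. -/
/-- The points of the Lemma 6 construction: `p 1 = (0,0)`,
`p j = (a(j-1) + (j-2)(j-1)/2, j-1)` for `2 ≤ j ≤ h-1`, and `p h = (a+h-2, 1)`. -/
def lemma6Pt (a h j : ℕ) : ℤ × ℤ :=
  if j = 1 then (0, 0)
  else if j = h then ((a : ℤ) + (h : ℤ) - 2, 1)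
  else ((a : ℤ) * ((j : ℤ) - 1) + ((j : ℤ) - 2) * ((j : ℤ) - 1) / 2, (j : ℤ) - 1)

/-- Cross product of two plane vectors. -/
def cross2 (u v : ℤ × ℤ) : ℤ := u.1 * v.2 - u.2 * v.1

/-- Cyclic successor on the index range `1, …, h`. -/
def cycSucc (h j : ℕ) : ℕ := if j = h then 1 else j + 1

lemma lemma6Pt_rep (a h j : ℕ) (hh : 3 ≤ h) (h1 : 1 ≤ j) (h2 : j ≤ h - 1) :
    ∃ x : ℤ, lemma6Pt a h j = (x, (j : ℤ) - 1) ∧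
      2 * x = 2 * (a : ℤ) * ((j : ℤ) - 1) + ((j : ℤ) - 2) * ((j : ℤ) - 1) := by
  rcases eq_or_ne j 1 with rfl | hj1
  · exact ⟨0, by simp [lemma6Pt], by norm_num⟩
  · have hjh : j ≠ h := by omega
    refine ⟨(a : ℤ) * ((j : ℤ) - 1) + ((j : ℤ) - 2) * ((j : ℤ) - 1) / 2,
      by simp [lemma6Pt, hj1, hjh], ?_⟩
    have hev : Even (((j : ℤ) - 2) * ((j : ℤ) - 1)) := by
      have := Int.even_mul_succ_self ((j : ℤ) - 2)
      simpa [show ((j:ℤ) - 2) + 1 = (j:ℤ) - 1 by ring] using this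
    have := Int.two_mul_ediv_two_of_even hev
    linarith

lemma cycSucc_ne (h j : ℕ) (hne : j ≠ h) : cycSucc h j = j + 1 := if_neg hne
lemma cycSucc_self (h : ℕ) : cycSucc h h = 1 := if_pos rfl

lemma lemma6Pt_last (a h : ℕ) (hh : 3 ≤ h) :
    lemma6Pt a h h = ((a : ℤ) + (h : ℤ) - 2, 1) := by
  simp [lemma6Pt, show h ≠ 1 by omega]

/-- Lemma 6 construction gives a strictly convex polygon: for `h ≥ 3` and `a ∈ ℕ`,
the points `p 1, …, p h` are pairwise distinct and every cyclically consecutive triple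
turns strictly in the same rotational direction (here: clockwise, negative cross). -/
theorem stmt_3 (a h : ℕ) (hh : 3 ≤ h) :
    (∀ i j, 1 ≤ i → i < j → j ≤ h → lemma6Pt a h i ≠ lemma6Pt a h j) ∧
    (∀ j, 1 ≤ j → j ≤ h →
      cross2 (lemma6Pt a h (cycSucc h j) - lemma6Pt a h j)
        (lemma6Pt a h (cycSucc h (cycSucc h j)) - lemma6Pt a h (cycSucc h j)) < 0) := by
  constructor
  · intro i j hi hij hjh
    rcases eq_or_ne j h with rfl | hjne
    · obtain ⟨x, hx, hx2⟩ := lemma6Pt_rep a j i hh hi (by omega)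
      rw [hx, lemma6Pt_last a j hh]
      intro heq
      rw [Prod.ext_iff] at heq
      obtain ⟨he1, he2⟩ := heq
      simp at he1 he2
      have hi2 : (i : ℤ) = 2 := by omega
      rw [hi2] at hx2
      norm_num at hx2
      omega
    · obtain ⟨x, hx, _⟩ := lemma6Pt_rep a h i hh hi (by omega)
      obtain ⟨y, hy, _⟩ := lemma6Pt_rep a h j hh (by omega) (by omega)
      rw [hx, hy]
      intro heq
      rw [Prod.ext_iff] at heq
      have := heq.2
      simp at this
      omega
  · intro j hj1 hjh
    rcases Nat.lt_or_ge j (h - 2) with hcase | hcase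
    · -- j ≤ h - 3 : all three points in range
      have hs1 : cycSucc h j = j + 1 := cycSucc_ne h j (by omega)
      have hs2 : cycSucc h (j + 1) = j + 2 := cycSucc_ne h (j+1) (by omega)
      rw [hs1, hs2]
      obtain ⟨x1, hx1, hx12⟩ := lemma6Pt_rep a h j hh hj1 (by omega)
      obtain ⟨x2, hx2, hx22⟩ := lemma6Pt_rep a h (j+1) hh (by omega) (by omega)
      obtain ⟨x3, hx3, hx32⟩ := lemma6Pt_rep a h (j+2) hh (by omega) (by omega)
      rw [hx1, hx2, hx3]
      simp only [cross2, Prod.fst_sub, Prod.snd_sub]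
      push_cast at hx12 hx22 hx32 ⊢
      ring_nf
      ring_nf at hx12 hx22 hx32
      linarith
    · rcases eq_or_ne j (h - 2) with rfl | hne2
      · -- points h-2, h-1, h
        have hs1 : cycSucc h (h-2) = h - 1 := by rw [cycSucc_ne h (h-2) (by omega)]; omega
        have hs2 : cycSucc h (h-1) = h := by rw [cycSucc_ne h (h-1) (by omega)]; omega
        rw [hs1, hs2, lemma6Pt_last a h hh]
        obtain ⟨x1, hx1, hx12⟩ := lemma6Pt_rep a h (h-2) hh (by omega) (by omega)
        obtain ⟨x2, hx2, hx22⟩ := lemma6Pt_rep a h (h-1) hh (by omega) (by omega)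
        rw [hx1, hx2]
        simp only [cross2, Prod.fst_sub, Prod.snd_sub]
        have c1 : ((h - 2 : ℕ) : ℤ) = (h : ℤ) - 2 := by omega
        have c2 : ((h - 1 : ℕ) : ℤ) = (h : ℤ) - 1 := by omega
        rw [c1] at hx12 ⊢
        rw [c2] at hx22 ⊢
        have hk : (3 : ℤ) ≤ (h : ℤ) := by exact_mod_cast hh
        nlinarith [sq_nonneg ((h:ℤ) - 3), hx12, hx22]
      · rcases eq_or_ne j (h - 1) with rfl | hne1
        · -- points h-1, h, 1
          have hs1 : cycSucc h (h-1) = h := by rw [cycSucc_ne h (h-1) (by omega)]; omega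
          have hs2 : cycSucc h h = 1 := cycSucc_self h
          rw [hs1, hs2, lemma6Pt_last a h hh]
          obtain ⟨x1, hx1, hx12⟩ := lemma6Pt_rep a h (h-1) hh (by omega) (by omega)
          have hp1 : lemma6Pt a h 1 = (0, 0) := by simp [lemma6Pt]
          rw [hx1, hp1]
          simp only [cross2, Prod.fst_sub, Prod.snd_sub]
          have c2 : ((h - 1 : ℕ) : ℤ) = (h : ℤ) - 1 := by omega
          rw [c2] at hx12 ⊢
          have hk : (3 : ℤ) ≤ (h : ℤ) := by exact_mod_cast hh
          nlinarith [sq_nonneg ((h:ℤ) - 2), hx12]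
        · -- j = h : points h, 1, 2
          have hjeq : j = h := by omega
          rw [hjeq]
          have hs1 : cycSucc h h = 1 := cycSucc_self h
          have hs2 : cycSucc h 1 = 2 := cycSucc_ne h 1 (by omega)
          rw [hs1, hs2, lemma6Pt_last a h hh]
          have hp1 : lemma6Pt a h 1 = (0, 0) := by simp [lemma6Pt]
          obtain ⟨x2, hx2, hx22⟩ := lemma6Pt_rep a h 2 hh (by omega) (by omega)
          rw [hp1, hx2]
          simp only [cross2, Prod.fst_sub, Prod.snd_sub]
          have hk : (3 : ℤ) ≤ (h : ℤ) := by exact_mod_cast hh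
          norm_num at hx22 ⊢
          linarith
end

section
/- All of the points p_3, …, p_h of the Lemma 6 construction lie strictly in the right half-plane of the directed line through p_1 = (0,0) and p_2 = (a,1). -/
/-- Property I.3 of Lemma 6: all of the points `p₃, …, p_h` lie strictly in the right
half-plane of the directed line through `p₁ = (0,0)` and `p₂ = (a,1)`, i.e.
`x(p_j) > a · y(p_j)`. -/
theorem stmt_7 (a h : ℕ) (hh : 3 ≤ h) :
    ∀ j, 3 ≤ j → j ≤ h → (a : ℤ) * (lemma6Pt a h j).2 < (lemma6Pt a h j).1 := by
  intro j hj3 hjh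
  have hj1 : j ≠ 1 := by omega
  unfold lemma6Pt
  rw [if_neg hj1]
  by_cases hje : j = h
  · rw [if_pos hje]
    simp only
    have : (3 : ℤ) ≤ (h : ℤ) := by exact_mod_cast hh
    linarith
  · rw [if_neg hje]
    simp only
    have hj : (3 : ℤ) ≤ (j : ℤ) := by exact_mod_cast hj3
    have h2 : (2 : ℤ) ≤ ((j : ℤ) - 2) * ((j : ℤ) - 1) := by nlinarith
    have hdiv : (1 : ℤ) ≤ ((j : ℤ) - 2) * ((j : ℤ) - 1) / 2 := by omega
    linarith
end

section
/- A planar drawing of a cycle of length n on the integer grid in which the cycle bounds a strictly convex polygon requires area Ω(n³); consequently, if a grid drawing contains Ω(n/k) vertex-disjoint strictly convex polygons each with k vertices, its total area is Ω(nk²). -/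
open MeasureTheory

/-- Packing argument of Theorem 8: assume (Andrews) every strictly convex lattice
`k`-gon has area at least `C·k³`. If a rectangle `R` of area `A = w·h` contains
`m ≥ c·n/k` pairwise disjoint such polygons (here: pairwise disjoint measurable sets
`S i ⊆ R`, each of area at least `C·k³`), then `A ≥ c·C·n·k²`. -/
theorem stmt_9 (C c : ℝ) (hC : 0 < C) (hc : 0 < c) (n k : ℝ) (hk : 3 ≤ k) (hn : 0 < n)
    (m : ℕ) (hm : c * n / k ≤ m)
    (w h A : ℝ) (hw : 0 < w) (hh : 0 < h) (hA : A = w * h)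
    (R : Set (ℝ × ℝ)) (hR : R = Set.Icc (0, 0) (w, h))
    (S : Fin m → Set (ℝ × ℝ))
    (hsub : ∀ i, S i ⊆ R)
    (hmeas : ∀ i, MeasurableSet (S i))
    (hdisj : Pairwise (Function.onFun Disjoint S))
    (harea : ∀ i, C * k ^ 3 ≤ (volume (S i)).toReal) :
    c * C * n * k ^ 2 ≤ A := by
  have hk0 : (0:ℝ) < k := lt_of_lt_of_le (by norm_num) hk
  -- volume of R
  have hvolR : volume R = ENNReal.ofReal w * ENNReal.ofReal h := by
    rw [hR, Set.Icc_prod_eq]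
    rw [show (volume : Measure (ℝ × ℝ)) = (volume : Measure ℝ).prod volume from rfl,
      Measure.prod_prod, Real.volume_Icc, Real.volume_Icc]
    simp
  have hRfin : volume R ≠ ⊤ := by
    rw [hvolR]; exact ENNReal.mul_ne_top ENNReal.ofReal_ne_top ENNReal.ofReal_ne_top
  have hSfin : ∀ i, volume (S i) ≠ ⊤ := fun i =>
    ne_top_of_le_ne_top hRfin (measure_mono (hsub i))
  have hsum : ∑ i, volume (S i) ≤ volume R := by
    rw [← measure_biUnion_finset ((Set.pairwise_univ.mpr hdisj).mono (by simp))
      (fun i _ => hmeas i)]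
    exact measure_mono (Set.iUnion₂_subset fun i _ => hsub i)
  have hsumR : ∑ i, (volume (S i)).toReal ≤ A := by
    have h1 : (∑ i, volume (S i)).toReal ≤ (volume R).toReal :=
      ENNReal.toReal_mono hRfin hsum
    rw [ENNReal.toReal_sum (fun i _ => hSfin i)] at h1
    have h2 : (volume R).toReal = A := by
      rw [hvolR, ENNReal.toReal_mul, ENNReal.toReal_ofReal hw.le,
        ENNReal.toReal_ofReal hh.le, hA]
    linarith
  have hlow : (m : ℝ) * (C * k ^ 3) ≤ ∑ i, (volume (S i)).toReal := by
    calc (m : ℝ) * (C * k ^ 3) = ∑ _i : Fin m, (C * k ^ 3) := by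
          simp [Finset.sum_const, mul_comm]
      _ ≤ ∑ i, (volume (S i)).toReal := Finset.sum_le_sum fun i _ => harea i
  have hm' : c * n / k * (C * k ^ 3) ≤ (m : ℝ) * (C * k ^ 3) := by
    apply mul_le_mul_of_nonneg_right hm
    positivity
  have : c * n / k * (C * k ^ 3) = c * C * n * k ^ 2 := by
    field_simp
  linarith
end

section
/- Reflection merge of two convex chains: if points q_1, …, q_m with q_1 = (0,0) form a strictly convex polygon lying (except q_1) strictly right of the line through (0,0) with direction (1,1), and points q'_1, …, q'_{m'} with q'_1 = (0,0) form another such polygon, then after reflecting the second chain across the x-axis, the union of the two chains (joined at appropriately shifted rightmost vertices by a vertical unit segment) yields a strictly convex polygon. -/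
/-- Cross product of two plane vectors. -/
def crossR (u v : ℝ × ℝ) : ℝ := u.1 * v.2 - u.2 * v.1

/-- Reflection across the x-axis. -/
def reflX (u : ℝ × ℝ) : ℝ × ℝ := (u.1, -u.2)

private lemma chain_mono (m : ℕ) (f : ℕ → ℝ) (h : ∀ i, i < m → f i < f (i + 1)) :
    ∀ i j, i < j → j ≤ m → f i < f j := by
  intro i j hij hjm
  induction j with
  | zero => omega
  | succ k ih =>
    rcases Nat.lt_or_ge i k with h' | h'
    · exact lt_trans (ih h' (by omega)) (h k (by omega))
    · have hik : i = k := by omega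
      subst hik
      exact h i (by omega)

/-- Reflection merge of two convex chains (core of Lemma 7). Let `p 0, …, p (s-1)` be a
chain from `(0,0)` to `(b,1)` (`b > 0`) whose other points have positive `y`-coordinate
and whose edges have positive, strictly decreasing slopes; let `q 0, …, q (t-1)` be
another such chain with the same endpoints. Reflect the `q`-chain across the x-axis.
Then the cyclic sequence `p 0, …, p (s-1), reflX (q (t-1)), …, reflX (q 1)` — in which
the segment from `p (s-1) = (b,1)` to `reflX (q (t-1)) = (b,-1)` is vertical — consists
of pairwise distinct points and turns strictly clockwise at every vertex, i.e. it is the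
vertex cycle of a strictly convex polygon. -/
theorem stmt_12 (b : ℝ) (hb : 0 < b) (s t : ℕ) (hs : 2 ≤ s) (ht : 2 ≤ t)
    (p q : ℕ → ℝ × ℝ)
    (hp0 : p 0 = (0, 0)) (hps : p (s - 1) = (b, 1))
    (hq0 : q 0 = (0, 0)) (hqt : q (t - 1) = (b, 1))
    (hpy : ∀ i, 1 ≤ i → i ≤ s - 1 → 0 < (p i).2)
    (hqy : ∀ i, 1 ≤ i → i ≤ t - 1 → 0 < (q i).2)
    (hpslope : ∀ i, i < s - 1 → 0 < (p (i + 1)).1 - (p i).1 ∧ 0 < (p (i + 1)).2 - (p i).2)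
    (hqslope : ∀ i, i < t - 1 → 0 < (q (i + 1)).1 - (q i).1 ∧ 0 < (q (i + 1)).2 - (q i).2)
    (hpdec : ∀ i, i + 1 < s - 1 → crossR (p (i + 1) - p i) (p (i + 2) - p (i + 1)) < 0)
    (hqdec : ∀ i, i + 1 < t - 1 → crossR (q (i + 1) - q i) (q (i + 2) - q (i + 1)) < 0) :
    ∀ r : ℕ → ℝ × ℝ,
      (∀ i, i < s → r i = p i) →
      (∀ i, s ≤ i → i < s + t - 1 → r i = reflX (q (s + t - 1 - i))) →
      (∀ i j, i < j → j < s + t - 1 → r i ≠ r j) ∧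
      (∀ i, i < s + t - 1 →
        crossR (r ((i + 1) % (s + t - 1)) - r (i % (s + t - 1)))
          (r ((i + 2) % (s + t - 1)) - r ((i + 1) % (s + t - 1))) < 0) := by
  intro r hr1 hr2
  set n := s + t - 1 with hn
  have hsn : s < n := by omega
  have hn3 : 3 ≤ n := by omega
  have hr0 : r 0 = (0, 0) := by rw [hr1 0 (by omega), hp0]
  have rq' : ∀ i, s ≤ i → i ≤ n → r (i % n) = reflX (q (n - i)) := by
    intro i hsi hin
    rcases eq_or_lt_of_le hin with h | h
    · rw [h, Nat.mod_self, hr0, Nat.sub_self, hq0]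
      simp [reflX]
    · rw [Nat.mod_eq_of_lt h, hr2 i hsi h]
  have hpx : ∀ i j, i < j → j ≤ s - 1 → (p i).1 < (p j).1 :=
    chain_mono (s - 1) (fun i => (p i).1) (fun i h => by linarith [(hpslope i h).1])
  have hqx : ∀ i j, i < j → j ≤ t - 1 → (q i).1 < (q j).1 :=
    chain_mono (t - 1) (fun i => (q i).1) (fun i h => by linarith [(hqslope i h).1])
  constructor
  · -- distinctness
    intro i j hij hjn heq
    have ypos : ∀ k, 1 ≤ k → k < s → 0 < (r k).2 := by
      intro k h1 h2
      rw [hr1 k h2]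
      exact hpy k h1 (by omega)
    have yneg : ∀ k, s ≤ k → k < n → (r k).2 < 0 := by
      intro k h1 h2
      rw [hr2 k h1 h2]
      have := hqy (n - k) (by omega) (by omega)
      simp only [reflX]
      linarith
    rcases Nat.lt_or_ge j s with hjs | hjs
    · have hx := hpx i j hij (by omega)
      rw [hr1 i (by omega), hr1 j hjs] at heq
      exact absurd (congrArg Prod.fst heq) (ne_of_lt hx)
    · rcases Nat.lt_or_ge i s with his | his
      · have h2 := yneg j hjs hjn
        have h1 : 0 ≤ (r i).2 := by
          rcases Nat.eq_zero_or_pos i with h | h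
          · rw [h, hr0]
          · exact le_of_lt (ypos i h his)
        rw [heq] at h1
        linarith
      · have hx := hqx (n - j) (n - i) (by omega) (by omega)
        rw [hr2 i his (by omega), hr2 j hjs hjn] at heq
        have h1 := congrArg Prod.fst heq
        simp only [reflX] at h1
        linarith
  · -- clockwise turns
    intro i hi
    have him : i % n = i := Nat.mod_eq_of_lt hi
    have hcase : i + 1 < s - 1 ∨ i + 2 = s ∨ i + 1 = s ∨ (s ≤ i ∧ i + 2 ≤ n) ∨ i + 1 = n := by
      omega
    rcases hcase with h | h | h | ⟨h1, h2⟩ | h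
    · -- inside p chain
      have e1 : (i + 1) % n = i + 1 := Nat.mod_eq_of_lt (by omega)
      have e2 : (i + 2) % n = i + 2 := Nat.mod_eq_of_lt (by omega)
      rw [him, e1, e2, hr1 i (by omega), hr1 (i + 1) (by omega), hr1 (i + 2) (by omega)]
      exact hpdec i h
    · -- turn at p (s-1)
      have e1 : (i + 1) % n = i + 1 := Nat.mod_eq_of_lt (by omega)
      have e2 : (i + 2) % n = i + 2 := Nat.mod_eq_of_lt (by omega)
      rw [him, e1, e2, hr1 i (by omega), hr1 (i + 1) (by omega),
        hr2 (i + 2) (by omega) (by omega)]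
      have ei1 : i + 1 = s - 1 := by omega
      have en : n - (i + 2) = t - 1 := by omega
      rw [ei1, en, hps, hqt]
      have hsl := hpslope i (by omega)
      rw [ei1, hps] at hsl
      simp only [crossR, reflX, Prod.fst_sub, Prod.snd_sub] at hsl ⊢
      norm_num at hsl ⊢
      nlinarith [hsl.1, hsl.2]
    · -- turn at reflX (q (t-1)) = (b, -1)
      have e1 : (i + 1) % n = i + 1 := Nat.mod_eq_of_lt (by omega)
      rw [him, e1, hr1 i (by omega), hr2 (i + 1) (by omega) (by omega),
        rq' (i + 2) (by omega) (by omega)]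
      have e2 : n - (i + 1) = t - 1 := by omega
      have e3 : n - (i + 2) = t - 2 := by omega
      have ei : i = s - 1 := by omega
      rw [e2, e3, ei, hps, hqt]
      have hsl := hqslope (t - 2) (by omega)
      have e4 : t - 2 + 1 = t - 1 := by omega
      rw [e4, hqt] at hsl
      simp only [crossR, reflX, Prod.fst_sub, Prod.snd_sub] at hsl ⊢
      norm_num at hsl ⊢
      nlinarith [hsl.1, hsl.2]
    · -- inside reflected q chain
      have e1 : (i + 1) % n = i + 1 := Nat.mod_eq_of_lt (by omega)
      rw [him, e1, hr2 i h1 (by omega), hr2 (i + 1) (by omega) (by omega),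
        rq' (i + 2) (by omega) h2]
      obtain ⟨k, hk1, hk2, hk3⟩ : ∃ k, n - i = k + 2 ∧ n - (i + 1) = k + 1 ∧ n - (i + 2) = k :=
        ⟨n - i - 2, by omega, by omega, by omega⟩
      rw [hk1, hk2, hk3]
      have hd := hqdec k (by omega)
      simp only [crossR, reflX, Prod.fst_sub, Prod.snd_sub] at hd ⊢
      nlinarith [hd]
    · -- turn at (0,0)
      have e1 : (i + 1) % n = 0 := by rw [h, Nat.mod_self]
      have e2 : (i + 2) % n = 1 := by
        have h2 : i + 2 = n + 1 := by omega
        rw [h2, Nat.add_mod_left, Nat.mod_eq_of_lt (by omega)]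
      rw [him, e1, e2, hr0, hr1 1 (by omega), hr2 i (by omega) (by omega)]
      have e3 : n - i = 1 := by omega
      rw [e3]
      have h1 := hpslope 0 (by omega)
      have h2 := hqslope 0 (by omega)
      rw [hp0] at h1
      rw [hq0] at h2
      simp only [crossR, reflX, Prod.fst_sub, Prod.snd_sub] at h1 h2 ⊢
      norm_num at h1 h2 ⊢
      nlinarith [h1.1, h1.2, h2.1, h2.2]
end
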